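/- Let G be the comparability graph of a finite poset Π on [d]. The stable set polytope P_G (the chain polytope of Π) is Gorenstein (i.e., some lattice translate of some positive integer dilate is reflexive) if and only if all inclusion-maximal cliques of G, i.e., all maximal chains of Π, have the same size. More generally, for any perfect graph G, P_G is Gorenstein if and only if all inclusion-maximal cliques of G have the same cardinality. -/

import Mathlib

open Finset

/-- Dot product on `ℝ^d`. -/
def dot {d : ℕ} (x y : Fin d → ℝ) : ℝ := ∑ i, x i * y i

/-- Coordinatewise absolute value. -/
def absVec {d : ℕ} (p : Fin d → ℝ) : Fin d → ℝ := fun i => |p i|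

/-- A vector of signs `±1`. -/
def IsSignVec {d : ℕ} (σ : Fin d → ℝ) : Prop := ∀ i, σ i = 1 ∨ σ i = -1

/-- Coordinatewise sign flip. -/
def sflip {d : ℕ} (σ p : Fin d → ℝ) : Fin d → ℝ := fun i => σ i * p i

/-- A set is unconditional if it is closed under coordinate sign flips. -/
def Unconditional {d : ℕ} (K : Set (Fin d → ℝ)) : Prop :=
  ∀ σ : Fin d → ℝ, IsSignVec σ → ∀ p ∈ K, sflip σ p ∈ K

/-- A (nonempty) polytope: the convex hull of a nonempty finite set. -/
def IsPolytope {d : ℕ} (P : Set (Fin d → ℝ)) : Prop :=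
  ∃ V : Finset (Fin d → ℝ), V.Nonempty ∧ P = convexHull ℝ (V : Set (Fin d → ℝ))

/-- The nonnegative orthant of `ℝ^d`. -/
def nonnegOrthant (d : ℕ) : Set (Fin d → ℝ) := {x | ∀ i, 0 ≤ x i}

/-- An anti-blocking polytope: a polytope in the nonnegative orthant that is
down-closed with respect to the componentwise order. -/
def IsAntiBlocking {d : ℕ} (P : Set (Fin d → ℝ)) : Prop :=
  IsPolytope P ∧ P ⊆ nonnegOrthant d ∧
    ∀ q ∈ P, ∀ p : Fin d → ℝ, (∀ i, 0 ≤ p i ∧ p i ≤ q i) → p ∈ P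

/-- The unconditional set associated to a set `P`: all points whose vector of
absolute values lies in `P`. -/
def UPoly {d : ℕ} (P : Set (Fin d → ℝ)) : Set (Fin d → ℝ) := {p | absVec p ∈ P}

/-- Cast an integer vector to a real vector. -/
def intCast {d : ℕ} (a : Fin d → ℤ) : Fin d → ℝ := fun i => (a i : ℝ)

/-- A lattice polytope: convex hull of a nonempty finite set of integer points. -/
def IsLatticePolytope {d : ℕ} (P : Set (Fin d → ℝ)) : Prop :=
  ∃ V : Finset (Fin d → ℤ), V.Nonempty ∧ P = convexHull ℝ (intCast '' (V : Set (Fin d → ℤ)))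

/-- Reflexive polytope: `0` is interior and `P` is cut out by integral
inequalities with right-hand side `1`. -/
def IsReflexive {d : ℕ} (P : Set (Fin d → ℝ)) : Prop :=
  0 ∈ interior P ∧
    ∃ A : Finset (Fin d → ℤ), P = {x | ∀ a ∈ A, dot (intCast a) x ≤ 1}

/-- Indicator vector of a subset of `[d]`. -/
def indVec {d : ℕ} (s : Finset (Fin d)) : Fin d → ℝ := fun i => if i ∈ s then 1 else 0

/-- A stable (independent) set of a graph. -/
def IsStableSet {d : ℕ} (G : SimpleGraph (Fin d)) (s : Finset (Fin d)) : Prop :=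
  ∀ i ∈ s, ∀ j ∈ s, ¬ G.Adj i j

/-- The stable set polytope: convex hull of indicator vectors of stable sets. -/
def stableSetPolytope {d : ℕ} (G : SimpleGraph (Fin d)) : Set (Fin d → ℝ) :=
  convexHull ℝ {x | ∃ s : Finset (Fin d), IsStableSet G s ∧ x = indVec s}

/-- The clique number of a graph, as an extended natural number. -/
noncomputable def cliqueNumber {V : Type*} (G : SimpleGraph V) : ℕ∞ :=
  sSup {n : ℕ∞ | ∃ (m : ℕ) (t : Finset V), n = (m : ℕ∞) ∧ G.IsNClique m t}

/-- A graph is perfect if every induced subgraph has clique number equal to its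
chromatic number. -/
def IsPerfect {d : ℕ} (G : SimpleGraph (Fin d)) : Prop :=
  ∀ s : Set (Fin d), cliqueNumber (G.induce s) = (G.induce s).chromaticNumber

/-- A lattice polytope is Gorenstein if some integer translate of some positive
integer dilate is reflexive. -/
def IsGorenstein {d : ℕ} (P : Set (Fin d → ℝ)) : Prop :=
  ∃ (c : ℕ) (q : Fin d → ℤ), 0 < c ∧
    IsReflexive ((fun x => intCast q + (c : ℝ) • x) '' P)

/-- An inclusion-maximal clique. -/
def IsMaxClique {d : ℕ} (G : SimpleGraph (Fin d)) (C : Finset (Fin d)) : Prop :=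
  G.IsClique (C : Set (Fin d)) ∧
    ∀ C' : Finset (Fin d), G.IsClique (C' : Set (Fin d)) → C ⊆ C' → C = C'

/-!
Write `F x = q + c • x`. If `F '' P_G` is reflexive and some points of `P_G` lie on a
supporting hyperplane, the centroid of their images lies on the boundary of `F '' P_G`, so one
of the integral inequalities `a ⬝ᵥ y ≤ 1` cutting it out is tight at all of them. For the face
`x i = 0` with the points `0` and `e j` (`j ≠ i`) these equations force `q i = -1`; for the face
`x(C) = 1` of a maximal clique `C`, with the points `1_{j, φ j}` where `φ j ∈ C` is not adjacent
to `j`, they force `a` to be an integer multiple of `1_C` and then `c = |C| + 1`.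

Conversely, if all maximal cliques have size `s`, then `-1 + (s + 1) • P_G` is cut out by
`-y i ≤ 1` and `y(C) ≤ 1`, because for perfect `G` the polytope `P_G` equals
`QSTAB(G) = {x ≥ 0 : x(C) ≤ 1}`. For this, an integral weighting `m` with clique weights at
most `N` is covered by `N` stable sets (Lovász's replication argument), so `m / N ∈ P_G`;
real points of `QSTAB(G)` are limits of such points.
-/

open Matrix Filter Topology

section Halfspaces

variable {n : Type*} [Fintype n]

lemma isOpen_setOf_forall_dotProduct_lt (A : Finset (n → ℝ)) :
    IsOpen {y : n → ℝ | ∀ a ∈ A, a ⬝ᵥ y < 1} := by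
  simp only [Set.ofPred_forall]
  exact isOpen_biInter_finset fun a _ => isOpen_lt (by fun_prop) continuous_const

lemma dotProduct_lt_of_mem_interior {K : Set (n → ℝ)} {w y : n → ℝ} {β : ℝ} (hw : w ≠ 0)
    (hK : ∀ z ∈ K, w ⬝ᵥ z ≤ β) (hy : y ∈ interior K) : w ⬝ᵥ y < β := by
  have hpath : Tendsto (fun ε : ℝ => y + ε • w) (𝓝[>] 0) (𝓝 y) := by
    have : Continuous fun ε : ℝ => y + ε • w := by fun_prop
    simpa using (this.tendsto 0).mono_left nhdsWithin_le_nhds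
  obtain ⟨ε, hεK, hε⟩ :=
    ((hpath.eventually (mem_interior_iff_mem_nhds.1 hy)).and self_mem_nhdsWithin).exists
  have hww : 0 < w ⬝ᵥ w :=
    lt_of_le_of_ne (Finset.sum_nonneg fun i _ => mul_self_nonneg (w i))
      (Ne.symm (dotProduct_self_eq_zero.not.2 hw))
  have := hK _ hεK
  rw [dotProduct_add, dotProduct_smul, smul_eq_mul] at this
  nlinarith [mul_pos (Set.mem_Ioi.1 hε) hww]

lemma exists_forall_dotProduct_eq_one {ι : Type*} [Fintype ι] [Nonempty ι] {A : Finset (n → ℝ)}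
    {w : n → ℝ} {β : ℝ} (hw : w ≠ 0)
    (hK : ∀ z ∈ {z : n → ℝ | ∀ a ∈ A, a ⬝ᵥ z ≤ 1}, w ⬝ᵥ z ≤ β)
    (y : ι → n → ℝ) (hy : ∀ j, ∀ a ∈ A, a ⬝ᵥ y j ≤ 1) (hyw : ∀ j, w ⬝ᵥ y j = β) :
    ∃ a ∈ A, ∀ j, a ⬝ᵥ y j = 1 := by
  set N : ℝ := (Fintype.card ι : ℝ)
  have hN : 0 < N := Nat.cast_pos.2 Fintype.card_pos
  set b := N⁻¹ • ∑ j, y j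
  have hb : ∀ u, u ⬝ᵥ b = N⁻¹ * ∑ j, u ⬝ᵥ y j := fun u => by
    simp only [b, dotProduct_smul, dotProduct_sum, smul_eq_mul]
  have hwb : w ⬝ᵥ b = β := by
    simp [hb, hyw, N, hN.ne']
  have hbK : b ∉ interior {z : n → ℝ | ∀ a ∈ A, a ⬝ᵥ z ≤ 1} :=
    fun h => (dotProduct_lt_of_mem_interior hw hK h).ne hwb
  obtain ⟨a, ha, hab⟩ : ∃ a ∈ A, 1 ≤ a ⬝ᵥ b := by
    by_contra! hlt
    exact hbK (interior_maximal (fun z hz a ha => (hz a ha).le)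
      (isOpen_setOf_forall_dotProduct_lt A) hlt)
  refine ⟨a, ha, fun j => ?_⟩
  have hsum : ∑ j, a ⬝ᵥ y j = ∑ _j : ι, (1 : ℝ) := by
    refine le_antisymm (Finset.sum_le_sum fun j _ => hy j a ha) ?_
    rw [hb, inv_mul_eq_div, le_div_iff₀ hN] at hab
    simpa [N] using hab
  exact (Finset.sum_eq_sum_iff_of_le fun j _ => hy j a ha).1 hsum j (Finset.mem_univ j)

end Halfspaces

section StableSetPolytope

variable {d : ℕ} {G : SimpleGraph (Fin d)}

lemma indVec_dotProduct (s : Finset (Fin d)) (x : Fin d → ℝ) :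
    indVec s ⬝ᵥ x = ∑ i ∈ s, x i := by
  simp [indVec, dotProduct, ite_mul]

lemma sum_indVec (C s : Finset (Fin d)) : ∑ i ∈ C, indVec s i = #(C ∩ s) := by
  simp [indVec, Finset.sum_ite_mem]

lemma intCast_dotProduct_intCast (a b : Fin d → ℤ) :
    intCast a ⬝ᵥ intCast b = ((a ⬝ᵥ b : ℤ) : ℝ) := by
  simp [intCast, dotProduct]

lemma intCast_dotProduct_indVec (a : Fin d → ℤ) (s : Finset (Fin d)) :
    intCast a ⬝ᵥ indVec s = ((∑ k ∈ s, a k : ℤ) : ℝ) := by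
  rw [dotProduct_comm, indVec_dotProduct]
  simp [intCast]

lemma isStableSet_pair {i j : Fin d} (h : ¬ G.Adj i j) : IsStableSet G {i, j} := by
  intro a ha b hb hab
  simp only [Finset.mem_insert, Finset.mem_singleton] at ha hb
  rcases ha with rfl | rfl <;> rcases hb with rfl | rfl
  exacts [G.irrefl hab, h hab, h hab.symm, G.irrefl hab]

lemma isStableSet_of_card_le_one {s : Finset (Fin d)} (hs : #s ≤ 1) : IsStableSet G s :=
  fun i hi j hj => by rw [Finset.card_le_one.1 hs i hi j hj]; exact G.irrefl

lemma card_inter_le_one_of_isStableSet {C s : Finset (Fin d)} (hC : G.IsClique (C : Set (Fin d)))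
    (hs : IsStableSet G s) : #(C ∩ s) ≤ 1 :=
  Finset.card_le_one.2 fun a ha b hb => by
    rw [Finset.mem_inter] at ha hb
    by_contra hne
    exact hs a ha.2 b hb.2 (hC ha.1 hb.1 hne)

lemma indVec_mem_stableSetPolytope {s : Finset (Fin d)} (hs : IsStableSet G s) :
    indVec s ∈ stableSetPolytope G :=
  subset_convexHull ℝ _ ⟨s, hs, rfl⟩

lemma isClosed_stableSetPolytope : IsClosed (stableSetPolytope G) :=
  ((Set.finite_range indVec).subset (by rintro _ ⟨s, -, rfl⟩; exact ⟨s, rfl⟩)).isClosed_convexHull ℝ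

def fractionalStableSetPolytope (G : SimpleGraph (Fin d)) : Set (Fin d → ℝ) :=
  {x | (∀ i, 0 ≤ x i) ∧ ∀ C : Finset (Fin d), G.IsClique (C : Set (Fin d)) → ∑ i ∈ C, x i ≤ 1}

lemma convex_fractionalStableSetPolytope : Convex ℝ (fractionalStableSetPolytope G) := by
  intro x hx y hy a b ha hb hab
  refine ⟨fun i => ?_, fun C hC => ?_⟩
  · have := hx.1 i
    have := hy.1 i
    simp only [Pi.add_apply, Pi.smul_apply, smul_eq_mul]
    positivity
  calc ∑ i ∈ C, (a • x + b • y) i = a * ∑ i ∈ C, x i + b * ∑ i ∈ C, y i := by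
        simp [Finset.mul_sum, Finset.sum_add_distrib]
    _ ≤ a * 1 + b * 1 := by gcongr <;> [exact hx.2 C hC; exact hy.2 C hC]
    _ = 1 := by rw [mul_one, mul_one, hab]

lemma stableSetPolytope_subset_fractionalStableSetPolytope :
    stableSetPolytope G ⊆ fractionalStableSetPolytope G := by
  refine convexHull_min ?_ convex_fractionalStableSetPolytope
  rintro _ ⟨s, hs, rfl⟩
  refine ⟨fun i => by unfold indVec; positivity, fun C hC => ?_⟩
  rw [sum_indVec]
  exact_mod_cast card_inter_le_one_of_isStableSet hC hs

lemma exists_isMaxClique_superset {C₀ : Finset (Fin d)} (h : G.IsClique (C₀ : Set (Fin d))) :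
    ∃ C, IsMaxClique G C ∧ C₀ ⊆ C := by
  obtain ⟨C, hC₀, hC, hmax⟩ :=
    Finite.exists_le_maximal (p := fun C : Finset (Fin d) => G.IsClique (C : Set (Fin d))) h
  exact ⟨C, ⟨hC, fun C' hC' hCC' => le_antisymm hCC' (hmax hC' hCC')⟩, hC₀⟩

lemma IsMaxClique.exists_not_adj {C : Finset (Fin d)} (hC : IsMaxClique G C) (v : Fin d) :
    ∃ u ∈ C, ¬ G.Adj v u := by
  by_cases hv : v ∈ C
  · exact ⟨v, hv, G.irrefl⟩
  by_contra! hadj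
  have hclique : G.IsClique ((insert v C : Finset (Fin d)) : Set (Fin d)) := by
    rw [Finset.coe_insert]
    exact hC.1.insert fun u hu _ => hadj u hu
  exact hv (hC.2 _ hclique (Finset.subset_insert v C) ▸ Finset.mem_insert_self v C)

lemma mem_fractionalStableSetPolytope_of_isMaxClique {x : Fin d → ℝ} (hx₀ : ∀ i, 0 ≤ x i)
    (hx : ∀ C, IsMaxClique G C → ∑ i ∈ C, x i ≤ 1) : x ∈ fractionalStableSetPolytope G := by
  refine ⟨hx₀, fun C hC => ?_⟩
  obtain ⟨C', hC', hCC'⟩ := exists_isMaxClique_superset hC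
  exact (Finset.sum_le_sum_of_subset_of_nonneg hCC' fun i _ _ => hx₀ i).trans (hx C' hC')

def IsStableCover (G : SimpleGraph (Fin d)) {N : ℕ} (S : Fin N → Finset (Fin d))
    (m : Fin d → ℕ) : Prop :=
  (∀ t, IsStableSet G (S t)) ∧ ∀ i, #{t | i ∈ S t} = m i

lemma IsStableCover.sum_eq {N : ℕ} {S : Fin N → Finset (Fin d)} {m : Fin d → ℕ}
    (hS : IsStableCover G S m) (C : Finset (Fin d)) : ∑ i ∈ C, m i = ∑ t, #(C ∩ S t) := by
  simp_rw [← hS.2, Finset.card_filter, ← Finset.filter_mem_eq_inter (s := C), Finset.card_filter]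
  exact Finset.sum_comm

lemma IsStableCover.sum_le_of_disjoint {N : ℕ} {S : Fin (N + 1) → Finset (Fin d)}
    {m : Fin d → ℕ} (hS : IsStableCover G S m) {C : Finset (Fin d)}
    (hC : G.IsClique (C : Set (Fin d))) {α : Fin (N + 1)} (hα : Disjoint C (S α)) :
    ∑ i ∈ C, m i ≤ N := by
  rw [hS.sum_eq, ← Finset.add_sum_erase _ _ (Finset.mem_univ α),
    Finset.disjoint_iff_inter_eq_empty.1 hα, Finset.card_empty, zero_add]
  calc ∑ t ∈ Finset.univ.erase α, #(C ∩ S t) ≤ ∑ _t ∈ Finset.univ.erase α, 1 :=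
        Finset.sum_le_sum fun t _ => card_inter_le_one_of_isStableSet hC (hS.1 t)
    _ = N := by simp

lemma IsStableCover.cons {N : ℕ} {S : Fin N → Finset (Fin d)} {k m : Fin d → ℕ}
    (hS : IsStableCover G S k) {T : Finset (Fin d)} (hT : IsStableSet G T)
    (hm : ∀ i, k i + (if i ∈ T then 1 else 0) = m i) :
    IsStableCover G (Fin.cons T S : Fin (N + 1) → Finset (Fin d)) m := by
  refine ⟨Fin.cases hT hS.1, fun i => ?_⟩
  rw [← hm, ← hS.2, Finset.card_filter, Finset.card_filter, Fin.sum_univ_succ]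
  simp only [Fin.cons_zero, Fin.cons_succ]
  ring

lemma IsStableCover.ite_le {N : ℕ} {S : Fin N → Finset (Fin d)} {m : Fin d → ℕ}
    (hS : IsStableCover G S m) (α : Fin N) (i : Fin d) : (if i ∈ S α then 1 else 0) ≤ m i := by
  split_ifs with h
  · rw [← hS.2, Nat.one_le_iff_ne_zero, Ne, Finset.card_eq_zero, Finset.filter_eq_empty_iff]
    exact fun h' => h' (Finset.mem_univ α) h
  · exact Nat.zero_le _

lemma IsPerfect.colorable_induce (hG : IsPerfect G) {s : Set (Fin d)} {N : ℕ}
    (hs : ∀ C : Finset (Fin d), G.IsClique (C : Set (Fin d)) → (C : Set (Fin d)) ⊆ s → #C ≤ N) :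
    (G.induce s).Colorable N := by
  rw [← SimpleGraph.chromaticNumber_le_iff_colorable, ← hG s]
  refine sSup_le ?_
  rintro _ ⟨n, t, rfl, ht⟩
  have hclique : G.IsClique ((t.map (Function.Embedding.subtype _) : Finset (Fin d)) : Set _) := by
    simpa using SimpleGraph.isClique_induce_iff.1 ht.1
  have := hs _ hclique (by simp)
  rw [Finset.card_map, ht.2] at this
  exact_mod_cast this

lemma exists_isStableCover_of_le_one (hG : IsPerfect G) {N : ℕ} {m : Fin d → ℕ}
    (hm1 : ∀ i, m i ≤ 1)
    (hm : ∀ C : Finset (Fin d), G.IsClique (C : Set (Fin d)) → ∑ i ∈ C, m i ≤ N) :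
    ∃ S : Fin N → Finset (Fin d), IsStableCover G S m := by
  classical
  obtain ⟨col⟩ := hG.colorable_induce (s := {i | m i = 1}) fun C hC hCs => by
    calc #C = ∑ i ∈ C, m i := by
          rw [Finset.card_eq_sum_ones]; exact Finset.sum_congr rfl fun i hi => (hCs hi).symm
      _ ≤ N := hm C hC
  refine ⟨fun t => {i | ∃ h : m i = 1, col ⟨i, h⟩ = t}, fun t i hi j hj hij => ?_, fun i => ?_⟩
  · simp only [Finset.mem_filter, Finset.mem_univ, true_and] at hi hj
    obtain ⟨hi, rfl⟩ := hi
    obtain ⟨hj, hcol⟩ := hj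
    exact col.valid (by simpa using hij) hcol.symm
  · rcases Nat.le_one_iff_eq_zero_or_eq_one.1 (hm1 i) with h | h
    · simp [h]
    · simp [h, Finset.filter_eq]

lemma sum_tsub_ite_le_of_isStableCover {N : ℕ} {S : Fin (N + 1) → Finset (Fin d)}
    {m : Fin d → ℕ} {v : Fin d} {α : Fin (N + 1)} (hS : IsStableCover G S (m - Pi.single v 1))
    (hvα : v ∈ S α)
    (hm : ∀ C : Finset (Fin d), G.IsClique (C : Set (Fin d)) → ∑ i ∈ C, m i ≤ N + 1)
    {C : Finset (Fin d)} (hC : G.IsClique (C : Set (Fin d))) :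
    ∑ i ∈ C, (m i - if i ∈ S α then 1 else 0) ≤ N := by
  have hsum : ∑ i ∈ C, (m i - if i ∈ S α then 1 else 0) + #(C ∩ S α) = ∑ i ∈ C, m i := by
    rw [← Finset.filter_mem_eq_inter, Finset.card_filter, ← Finset.sum_add_distrib]
    exact Finset.sum_congr rfl fun i _ =>
      tsub_add_cancel_of_le ((hS.ite_le α i).trans tsub_le_self)
  rcases Nat.le_one_iff_eq_zero_or_eq_one.1 (card_inter_le_one_of_isStableSet hC (hS.1 α))
    with h | h
  · have hvC : v ∉ C := fun hv => Finset.card_ne_zero.2 ⟨v, Finset.mem_inter.2 ⟨hv, hvα⟩⟩ h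
    have hmC : ∑ i ∈ C, m i = ∑ i ∈ C, (m - Pi.single v 1 : Fin d → ℕ) i :=
      Finset.sum_congr rfl fun i hi => by simp [Pi.single_eq_of_ne (ne_of_mem_of_not_mem hi hvC)]
    have := hS.sum_le_of_disjoint hC (Finset.disjoint_iff_inter_eq_empty.2
      (Finset.card_eq_zero.1 h))
    omega
  · have := hm C hC
    omega

theorem exists_isStableCover (hG : IsPerfect G) {N : ℕ} {m : Fin d → ℕ}
    (hm : ∀ C : Finset (Fin d), G.IsClique (C : Set (Fin d)) → ∑ i ∈ C, m i ≤ N) :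
    ∃ S : Fin N → Finset (Fin d), IsStableCover G S m := by
  induction hW : ∑ i, m i using Nat.strong_induction_on generalizing N m with
  | _ W ih =>
  subst hW
  by_cases hle : ∀ i, m i ≤ 1
  · exact exists_isStableCover_of_le_one hG hle hm
  -- Cover `m - e v` by `N + 1` stable sets, one of which, `T`, contains `v`. Every clique
  -- meets `T` at most once, and a clique missing `T` is covered by the other `N` sets, so
  -- `m - 1_T` has clique weights at most `N` and can be covered by `N` stable sets.
  obtain ⟨v, hv⟩ := not_forall.1 hle
  obtain ⟨N, rfl⟩ : ∃ N', N = N' + 1 := Nat.exists_eq_add_one.2 <| by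
    have := hm {v} (by simp)
    rw [Finset.sum_singleton] at this
    omega
  have hlt : ∀ k : Fin d → ℕ, k ≤ m → k v < m v → ∑ i, k i < ∑ i, m i := fun k hk hkv =>
    Finset.sum_lt_sum (fun i _ => hk i) ⟨v, Finset.mem_univ v, hkv⟩
  obtain ⟨S, hS⟩ := ih _ (hlt (m - Pi.single v 1) tsub_le_self (by simp; omega))
    (fun C hC => (Finset.sum_le_sum fun i _ => tsub_le_self).trans (hm C hC)) rfl
  have hv' : #{t | v ∈ S t} ≠ 0 := by rw [hS.2]; simp; omega
  obtain ⟨α, -, hvα⟩ := Finset.filter_nonempty_iff.1 (Finset.card_ne_zero.1 hv')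
  obtain ⟨S', hS'⟩ := ih _ (hlt (fun i => m i - if i ∈ S α then 1 else 0)
      (fun i => tsub_le_self) (by simp [hvα]; omega))
    (fun C hC => sum_tsub_ite_le_of_isStableCover hS hvα hm hC) rfl
  exact ⟨_, hS'.cons (hS.1 α) fun i =>
    tsub_add_cancel_of_le ((hS.ite_le α i).trans tsub_le_self)⟩

lemma IsStableCover.div_mem_stableSetPolytope {N : ℕ} [NeZero N] {S : Fin N → Finset (Fin d)}
    {m : Fin d → ℕ} (hS : IsStableCover G S m) :
    (fun i => (m i : ℝ) / N) ∈ stableSetPolytope G := by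
  have hN : (N : ℝ) ≠ 0 := NeZero.ne _
  have hmem : ∑ t, (N : ℝ)⁻¹ • indVec (S t) ∈ stableSetPolytope G :=
    (convex_convexHull ℝ _).sum_mem (fun _ _ => by positivity) (by simp [hN])
      fun t _ => indVec_mem_stableSetPolytope (hS.1 t)
  convert hmem using 1
  funext i
  simp [indVec, ← hS.2 i, div_eq_mul_inv, Finset.sum_ite]

theorem fractionalStableSetPolytope_subset_stableSetPolytope (hG : IsPerfect G) :
    fractionalStableSetPolytope G ⊆ stableSetPolytope G := by
  intro x hx
  have hlim : Tendsto (fun N : ℕ => fun i => (⌊x i * N⌋₊ : ℝ) / N) atTop (𝓝 x) :=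
    tendsto_pi_nhds.2 fun i =>
      (tendsto_nat_floor_mul_div_atTop (hx.1 i)).comp tendsto_natCast_atTop_atTop
  refine isClosed_stableSetPolytope.mem_of_tendsto hlim (eventually_atTop.2 ⟨1, fun N hN => ?_⟩)
  have : NeZero N := ⟨by omega⟩
  refine (exists_isStableCover hG fun C hC => ?_).choose_spec.div_mem_stableSetPolytope
  have hfloor : ∑ i ∈ C, (⌊x i * N⌋₊ : ℝ) ≤ N := calc
    _ ≤ ∑ i ∈ C, x i * N := Finset.sum_le_sum fun i _ =>
        Nat.floor_le (mul_nonneg (hx.1 i) (Nat.cast_nonneg N))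
    _ = (∑ i ∈ C, x i) * N := (Finset.sum_mul ..).symm
    _ ≤ 1 * N := by gcongr; exact hx.2 C hC
    _ = N := one_mul _
  exact_mod_cast hfloor

lemma isReflexive_setOf_forall_dot_le_one (A : Finset (Fin d → ℤ)) :
    IsReflexive {x | ∀ a ∈ A, dot (intCast a) x ≤ 1} := by
  refine ⟨interior_maximal (fun y hy a ha => (hy _ (Finset.mem_image_of_mem _ ha)).le)
    (isOpen_setOf_forall_dotProduct_lt (A.image intCast)) ?_, A, rfl⟩
  simp

lemma exists_tight_of_isReflexive {P : Set (Fin d → ℝ)} {c : ℕ} {q : Fin d → ℤ}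
    (hR : IsReflexive ((fun x => intCast q + (c : ℝ) • x) '' P)) {w : Fin d → ℝ} {γ : ℝ}
    (hw : w ≠ 0) (hP : ∀ x ∈ P, w ⬝ᵥ x ≤ γ) {ι : Type*} [Fintype ι] [Nonempty ι]
    (p : ι → Fin d → ℝ) (hp : ∀ j, p j ∈ P) (hpw : ∀ j, w ⬝ᵥ p j = γ) :
    0 < w ⬝ᵥ intCast q + c * γ ∧
      ∃ a : Fin d → ℤ, ∀ j, intCast a ⬝ᵥ intCast q + c * (intCast a ⬝ᵥ p j) = 1 := by
  obtain ⟨h0, A, hA⟩ := hR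
  have hdot : ∀ u x, u ⬝ᵥ (intCast q + (c : ℝ) • x) = u ⬝ᵥ intCast q + c * (u ⬝ᵥ x) :=
    fun u x => by rw [dotProduct_add, dotProduct_smul, smul_eq_mul]
  have hK : ∀ y ∈ (fun x => intCast q + (c : ℝ) • x) '' P, w ⬝ᵥ y ≤ w ⬝ᵥ intCast q + c * γ := by
    rintro _ ⟨x, hx, rfl⟩
    rw [hdot]
    gcongr
    exact hP x hx
  refine ⟨by simpa using dotProduct_lt_of_mem_interior hw hK h0, ?_⟩
  have hpK : ∀ j, ∀ a ∈ A.image intCast, a ⬝ᵥ (intCast q + (c : ℝ) • p j) ≤ 1 := by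
    intro j _ h
    obtain ⟨a, ha, rfl⟩ := Finset.mem_image.1 h
    have : intCast q + (c : ℝ) • p j ∈ {x | ∀ a ∈ A, dot (intCast a) x ≤ 1} := by
      rw [← hA]; exact ⟨p j, hp j, rfl⟩
    exact this a ha
  rw [hA] at hK
  obtain ⟨_, ha, htight⟩ := exists_forall_dotProduct_eq_one hw
    (fun z hz => hK z fun a ha => hz _ (Finset.mem_image_of_mem _ ha)) _ hpK
    (fun j => by rw [hdot, hpw])
  obtain ⟨a, -, rfl⟩ := Finset.mem_image.1 ha
  exact ⟨a, fun j => by rw [← hdot]; exact htight j⟩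

lemma image_stableSetPolytope_eq (hG : IsPerfect G) {s : ℕ}
    (hs : ∀ C, IsMaxClique G C → #C = s) :
    (fun x => intCast (fun _ => -1) + ((s + 1 : ℕ) : ℝ) • x) '' stableSetPolytope G =
      {y | (∀ i, -1 ≤ y i) ∧ ∀ C, IsMaxClique G C → ∑ i ∈ C, y i ≤ 1} := by
  ext y
  constructor
  · rintro ⟨x, hx, rfl⟩
    obtain ⟨hx₀, hxC⟩ := stableSetPolytope_subset_fractionalStableSetPolytope hx
    refine ⟨fun i => ?_, fun C hC => ?_⟩
    · have := hx₀ i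
      simp only [intCast, Pi.add_apply, Pi.smul_apply, smul_eq_mul]
      push_cast
      nlinarith
    · have := hxC C hC.1
      simp only [intCast, Pi.add_apply, Pi.smul_apply, smul_eq_mul, Finset.sum_add_distrib,
        ← Finset.mul_sum, Finset.sum_const, hs C hC, nsmul_eq_mul]
      push_cast
      nlinarith
  · rintro ⟨hy₀, hyC⟩
    have hs₀ : (0 : ℝ) < s + 1 := by positivity
    refine ⟨((s : ℝ) + 1)⁻¹ • (y + 1), fractionalStableSetPolytope_subset_stableSetPolytope hG
      (mem_fractionalStableSetPolytope_of_isMaxClique (fun i => ?_) fun C hC => ?_), ?_⟩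
    · have := hy₀ i
      simp only [Pi.smul_apply, Pi.add_apply, Pi.one_apply, smul_eq_mul]
      have : 0 ≤ y i + 1 := by linarith
      positivity
    · have := hyC C hC
      simp only [Pi.smul_apply, Pi.add_apply, Pi.one_apply, smul_eq_mul, ← Finset.mul_sum,
        Finset.sum_add_distrib, Finset.sum_const, hs C hC]
      rw [inv_mul_le_iff₀ hs₀]
      simp
      linarith
    · funext i
      simp [intCast]
      field_simp
      ring

theorem isGorenstein_stableSetPolytope (hG : IsPerfect G)
    (h : ∀ C C' : Finset (Fin d), IsMaxClique G C → IsMaxClique G C' → #C = #C') :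
    IsGorenstein (stableSetPolytope G) := by
  classical
  obtain ⟨C₀, hC₀, -⟩ := exists_isMaxClique_superset (G := G) (C₀ := ∅) (by simp)
  refine ⟨#C₀ + 1, fun _ => -1, Nat.succ_pos _, ?_⟩
  rw [image_stableSetPolytope_eq hG fun C hC => h C C₀ hC hC₀]
  convert isReflexive_setOf_forall_dot_le_one (Finset.univ.image (fun i => -Pi.single i 1) ∪
    (Finset.univ.filter (IsMaxClique G)).image fun C j => if j ∈ C then 1 else 0)
  simp [dot, intCast, or_imp, forall_and, Pi.single_apply, neg_le]

lemma eq_neg_one_of_isReflexive {c : ℕ} (hc : 0 < c) {q : Fin d → ℤ}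
    (hR : IsReflexive ((fun x => intCast q + (c : ℝ) • x) '' stableSetPolytope G)) (i : Fin d) :
    q i = -1 := by
  have : Nonempty (Fin d) := ⟨i⟩
  obtain ⟨hpos, a, ha⟩ := exists_tight_of_isReflexive hR (w := -indVec {i}) (γ := 0)
    (fun h => by simpa [indVec] using congrFun h i)
    (fun x hx => by
      simpa [indVec_dotProduct] using
        (stableSetPolytope_subset_fractionalStableSetPolytope hx).1 i)
    (fun j => indVec (({j} : Finset (Fin d)).erase i))
    (fun j => indVec_mem_stableSetPolytope (isStableSet_of_card_le_one
      ((Finset.card_erase_le).trans (Finset.card_singleton j).le)))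
    (fun j => by simp [indVec_dotProduct, indVec])
  have hZ : ∀ j, a ⬝ᵥ q + c * ∑ k ∈ ({j} : Finset (Fin d)).erase i, a k = 1 := fun j => by
    exact_mod_cast (intCast_dotProduct_intCast a q ▸ intCast_dotProduct_indVec a _ ▸ ha j)
  have hq : a ⬝ᵥ q = 1 := by simpa using hZ i
  have ha0 : ∀ j ≠ i, a j = 0 := fun j hj => by
    simpa [Finset.erase_eq_of_notMem (Finset.notMem_singleton.2 hj.symm), hq, hc.ne'] using hZ j
  have hqi : a i * q i = 1 := by
    rw [← hq, dotProduct, Finset.sum_eq_single i (fun j _ hj => by simp [ha0 j hj]) (by simp)]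
  have hneg : q i < 0 := by
    have : (0 : ℝ) < -q i := by simpa [indVec_dotProduct, intCast] using hpos
    exact_mod_cast neg_pos.1 this
  rcases Int.eq_one_or_neg_one_of_mul_eq_one' hqi with ⟨-, h⟩ | ⟨-, h⟩ <;> omega

lemma exists_mul_sum_add_eq_one_of_isReflexive [Nonempty (Fin d)] {c : ℕ} (hc : 0 < c)
    {q : Fin d → ℤ}
    (hR : IsReflexive ((fun x => intCast q + (c : ℝ) • x) '' stableSetPolytope G))
    {C : Finset (Fin d)} (hC : IsMaxClique G C) :
    0 < ∑ j ∈ C, q j + c ∧ ∃ l : ℤ, l * (∑ j ∈ C, q j + c) = 1 := by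
  classical
  choose φ hφC hφ using hC.exists_not_adj
  have hφ_self : ∀ j ∈ C, φ j = j := fun j hj => by
    by_contra h
    exact hφ j (hC.1 hj (hφC j) (Ne.symm h))
  have hstable : ∀ j, IsStableSet G {j, φ j} := fun j => isStableSet_pair (hφ j)
  obtain ⟨hpos, a, ha⟩ := exists_tight_of_isReflexive hR (w := indVec C) (γ := 1)
    (fun h => by simpa [indVec, hφC] using congrFun h (φ (Classical.arbitrary _)))
    (fun x hx => by
      simpa [indVec_dotProduct] using
        (stableSetPolytope_subset_fractionalStableSetPolytope hx).2 C hC.1)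
    (fun j => indVec {j, φ j}) (fun j => indVec_mem_stableSetPolytope (hstable j))
    (fun j => by
      rw [indVec_dotProduct, sum_indVec, Nat.cast_eq_one]
      exact le_antisymm (card_inter_le_one_of_isStableSet hC.1 (hstable j))
        (Finset.card_pos.2 ⟨φ j, by simp [hφC]⟩))
  have hpos' : (0 : ℝ) < ∑ j ∈ C, (q j : ℝ) + c := by
    simpa [indVec_dotProduct, intCast] using hpos
  refine ⟨by exact_mod_cast hpos', ?_⟩
  have hZ : ∀ j, a ⬝ᵥ q + c * ∑ k ∈ {j, φ j}, a k = 1 := fun j => by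
    exact_mod_cast (intCast_dotProduct_intCast a q ▸ intCast_dotProduct_indVec a _ ▸ ha j)
  set v := φ (Classical.arbitrary (Fin d))
  have hZv : a ⬝ᵥ q + c * a v = 1 := by simpa [hφ_self v (hφC _)] using hZ v
  have haC : ∀ j ∈ C, a j = a v := fun j hj => by
    have : a ⬝ᵥ q + c * a j = 1 := by simpa [hφ_self j hj] using hZ j
    exact (mul_right_injective₀ (by exact_mod_cast hc.ne')) (by omega : (c : ℤ) * a j = c * a v)
  have haC' : ∀ j ∉ C, a j = 0 := fun j hj => by
    have := hZ j
    rw [Finset.sum_pair (ne_of_mem_of_not_mem (hφC j) hj).symm, haC _ (hφC j)] at this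
    have : (c : ℤ) * a j = 0 := by linarith
    simpa [hc.ne'] using this
  have hq : a ⬝ᵥ q = a v * ∑ j ∈ C, q j := by
    rw [dotProduct, ← Finset.sum_subset (Finset.subset_univ C) fun j _ hj => by simp [haC' j hj],
      Finset.sum_congr rfl fun j hj => by rw [haC j hj], Finset.mul_sum]
  exact ⟨a v, by rw [hq] at hZv; linarith⟩

lemma card_add_one_eq_of_isReflexive [Nonempty (Fin d)] {c : ℕ} (hc : 0 < c) {q : Fin d → ℤ}
    (hR : IsReflexive ((fun x => intCast q + (c : ℝ) • x) '' stableSetPolytope G))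
    {C : Finset (Fin d)} (hC : IsMaxClique G C) : #C + 1 = c := by
  obtain ⟨hpos, l, hl⟩ := exists_mul_sum_add_eq_one_of_isReflexive hc hR hC
  have hsum : ∑ j ∈ C, q j = -#C := by simp [eq_neg_one_of_isReflexive hc hR]
  rw [hsum] at hpos hl
  rcases Int.eq_one_or_neg_one_of_mul_eq_one' hl with ⟨-, h⟩ | ⟨-, h⟩ <;> omega

end StableSetPolytope

/-- for a perfect graph `G` (in particular for the comparability
graph of a poset, whose stable set polytope is the chain polytope), the stable
set polytope `P_G` is Gorenstein iff all inclusion-maximal cliques of `G` have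
the same cardinality. -/
theorem stmt11 {d : ℕ} (G : SimpleGraph (Fin d)) (hG : IsPerfect G) :
    IsGorenstein (stableSetPolytope G) ↔
      ∀ C C' : Finset (Fin d), IsMaxClique G C → IsMaxClique G C' →
        C.card = C'.card := by
  refine ⟨fun ⟨c, q, hc, hR⟩ C C' hC hC' => ?_, isGorenstein_stableSetPolytope hG⟩
  cases isEmpty_or_nonempty (Fin d)
  · simp [Finset.eq_empty_of_isEmpty]
  · have := card_add_one_eq_of_isReflexive hc hR hC
    have := card_add_one_eq_of_isReflexive hc hR hC'
    omega
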